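/- arXiv:1603.09411 — 3 statements merged into one kernel-verified Lean document; each statement's English description precedes it below -/
import Mathlib

section
/- Let t₁(q) = (1/3)(2·θ₃(q²)θ₃(q⁶) − θ₃(−q²)θ₃(−q⁶)) = ∑_{k≥0} t_{1,k} q^k. For a nonnegative integer k, if 4 divides k then the number of integer solutions of x² + 3y² = k equals 3·t_{1,k}; otherwise it equals t_{1,k}. -/
open PowerSeries Classical

/-- The theta series `θ₃(q^{2r}) = 1 + 2 ∑_{j ≥ 1} q^{r j²}`, as a formal power
series in `q` with rational coefficients. -/
noncomputable def theta3Q (r : ℕ) : PowerSeries ℚ :=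
  PowerSeries.mk fun k => if k = 0 then 1 else
    if ∃ j : ℕ, 1 ≤ j ∧ r * j ^ 2 = k then 2 else 0

/-- `t₁(q) = (1/3)(2 θ₃(q²)θ₃(q⁶) − θ₃(−q²)θ₃(−q⁶))`;  substituting `−q` for `q`
is `PowerSeries.rescale (-1)`. -/
noncomputable def tOne : PowerSeries ℚ :=
  (1 / 3 : ℚ) • (2 * (theta3Q 1 * theta3Q 3) -
    PowerSeries.rescale (-1) (theta3Q 1 * theta3Q 3))

private lemma mem_Icc_of_sq_le {x : ℤ} {a : ℕ} (h : x ^ 2 ≤ (a : ℤ)) :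
    x ∈ Finset.Icc (-(a : ℤ)) a := by
  have h1 : |x| ≤ (a : ℤ) := by
    rcases eq_or_ne x 0 with rfl | hx
    · simpa using le_trans (by norm_num) h
    · calc |x| = |x| * 1 := by ring
        _ ≤ |x| * |x| := by
          have := Int.one_le_abs hx
          nlinarith [abs_nonneg x]
        _ = x ^ 2 := by rw [← sq_abs]; ring
        _ ≤ a := h
  simpa [Finset.mem_Icc] using abs_le.mp h1

private lemma coeff_theta3Q (r a : ℕ) (hr : 1 ≤ r) :
    coeff a (theta3Q r) =
      ((Finset.Icc (-(a : ℤ)) a).filter (fun x => (r : ℤ) * x ^ 2 = (a : ℤ))).card := by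
  rw [theta3Q, coeff_mk]
  rcases eq_or_ne a 0 with rfl | ha
  · norm_num [Finset.filter_singleton]
  · rw [if_neg ha]
    by_cases hex : ∃ j : ℕ, 1 ≤ j ∧ r * j ^ 2 = a
    · obtain ⟨j, hj1, hja⟩ := hex
      rw [if_pos ⟨j, hj1, hja⟩]
      have hset : (Finset.Icc (-(a : ℤ)) a).filter (fun x => (r : ℤ) * x ^ 2 = (a : ℤ))
          = {-(j : ℤ), (j : ℤ)} := by
        ext x
        simp only [Finset.mem_filter, Finset.mem_insert, Finset.mem_singleton]
        constructor
        · rintro ⟨-, hx⟩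
          have hja' : (r : ℤ) * (j : ℤ) ^ 2 = (a : ℤ) := by exact_mod_cast hja
          have hsq : x ^ 2 = (j : ℤ) ^ 2 := by
            have hr0 : (0 : ℤ) < (r : ℤ) := by exact_mod_cast hr
            have := hx.trans hja'.symm
            exact mul_left_cancel₀ hr0.ne' this
          have : (x - j) * (x + j) = 0 := by ring_nf; linarith [hsq]
          rcases mul_eq_zero.mp this with h | h
          · right; linarith
          · left; linarith
        · have hja' : (r : ℤ) * (j : ℤ) ^ 2 = (a : ℤ) := by exact_mod_cast hja
          have hsqle : (j : ℤ) ^ 2 ≤ (a : ℤ) := by nlinarith [sq_nonneg (j : ℤ)]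
          rintro (rfl | rfl)
          · exact ⟨mem_Icc_of_sq_le (by simpa using hsqle), by rw [neg_pow]; simpa using hja'⟩
          · exact ⟨mem_Icc_of_sq_le hsqle, hja'⟩
      rw [hset]
      have hj0 : (-(j : ℤ)) ≠ (j : ℤ) := by
        have : (1 : ℤ) ≤ j := by exact_mod_cast hj1
        omega
      rw [Finset.card_insert_of_notMem (by simpa using hj0), Finset.card_singleton]
      norm_num
    · rw [if_neg hex]
      have hset : (Finset.Icc (-(a : ℤ)) a).filter (fun x => (r : ℤ) * x ^ 2 = (a : ℤ)) = ∅ := by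
        ext x
        simp only [Finset.mem_filter, Finset.notMem_empty, iff_false, not_and]
        intro _ hx
        have hx0 : x ≠ 0 := by
          rintro rfl
          simp at hx
          omega
        refine hex ⟨x.natAbs, ?_, ?_⟩
        · omega
        · have h2 : ((r * x.natAbs ^ 2 : ℕ) : ℤ) = (a : ℤ) := by
            push_cast
            rw [sq_abs]
            exact hx
          exact_mod_cast h2
      rw [hset]; norm_num


private lemma mem_Icc_of_sq_le' {x : ℤ} {a : ℕ} (h : x ^ 2 ≤ (a : ℤ)) :
    x ∈ Finset.Icc (-(a : ℤ)) a := by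
  have h1 : |x| ≤ (a : ℤ) := by
    rcases eq_or_ne x 0 with rfl | hx
    · simpa using le_trans (by norm_num) h
    · calc |x| = |x| * 1 := by ring
        _ ≤ |x| * |x| := by have := Int.one_le_abs hx; nlinarith [abs_nonneg x]
        _ = x ^ 2 := by rw [← sq_abs]; ring
        _ ≤ a := h
  simpa [Finset.mem_Icc] using abs_le.mp h1

private noncomputable def Sf (r a : ℕ) : Finset ℤ :=
  (Finset.Icc (-(a : ℤ)) a).filter (fun x => (r : ℤ) * x ^ 2 = (a : ℤ))

private noncomputable def Tf (k : ℕ) : Finset (ℤ × ℤ) :=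
  ((Finset.Icc (-(k : ℤ)) k) ×ˢ (Finset.Icc (-(k : ℤ)) k)).filter
    (fun p => p.1 ^ 2 + 3 * p.2 ^ 2 = (k : ℤ))

private lemma natCard_eq_Tf (k : ℕ) :
    Nat.card {p : ℤ × ℤ // p.1 ^ 2 + 3 * p.2 ^ 2 = (k : ℤ)} = (Tf k).card := by
  have e : {p : ℤ × ℤ // p.1 ^ 2 + 3 * p.2 ^ 2 = (k : ℤ)} ≃ {p // p ∈ Tf k} := by
    apply Equiv.subtypeEquivRight
    intro p
    simp only [Tf, Finset.mem_filter, Finset.mem_product]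
    constructor
    · intro h
      refine ⟨⟨mem_Icc_of_sq_le' ?_, mem_Icc_of_sq_le' ?_⟩, h⟩
      · nlinarith [sq_nonneg p.2]
      · nlinarith [sq_nonneg p.1, sq_nonneg p.2]
    · exact fun h => h.2
  rw [Nat.card_congr e, Nat.card_eq_finsetCard]

private lemma Tf_card_eq_sum (k : ℕ) :
    (Tf k).card = ∑ x ∈ Finset.HasAntidiagonal.antidiagonal k, (Sf 1 x.1).card * (Sf 3 x.2).card := by
  classical
  rw [Finset.card_eq_sum_card_fiberwise
    (f := fun p : ℤ × ℤ => ((p.1 ^ 2).toNat, (3 * p.2 ^ 2).toNat))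
    (t := Finset.HasAntidiagonal.antidiagonal k) ?_]
  · refine Finset.sum_congr rfl (fun x hx => ?_)
    obtain ⟨a, b⟩ := x
    have hab : a + b = k := Finset.HasAntidiagonal.mem_antidiagonal.mp hx
    rw [← Finset.card_product]
    congr 1
    ext p
    obtain ⟨u, v⟩ := p
    simp only [Tf, Sf, Finset.mem_filter, Finset.mem_product, Prod.mk.injEq, Nat.cast_one, Nat.cast_ofNat, one_mul]
    constructor
    · rintro ⟨⟨-, hsum⟩, h1, h2⟩
      have hu : u ^ 2 = (a : ℤ) := by
        rw [← h1, Int.toNat_of_nonneg (sq_nonneg u)]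
      have hv : 3 * v ^ 2 = (b : ℤ) := by
        rw [← h2, Int.toNat_of_nonneg (by positivity)]
      exact ⟨⟨mem_Icc_of_sq_le' hu.le, hu⟩, mem_Icc_of_sq_le' (by nlinarith [sq_nonneg v]), hv⟩
    · rintro ⟨⟨-, hu⟩, -, hv⟩
      have hk : (a : ℤ) + b = k := by exact_mod_cast hab
      have hale : (a : ℤ) ≤ k := by
        have : (0 : ℤ) ≤ b := by positivity
        omega
      have hble : (b : ℤ) ≤ k := by
        have : (0 : ℤ) ≤ a := by positivity
        omega
      refine ⟨⟨⟨mem_Icc_of_sq_le' (hu.le.trans hale), mem_Icc_of_sq_le' ?_⟩, by omega⟩, ?_, ?_⟩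
      · nlinarith
      · omega
      · omega
  · intro p hp
    simp only [Tf, Finset.mem_coe, Finset.mem_filter] at hp
    rw [Finset.mem_coe, Finset.HasAntidiagonal.mem_antidiagonal]
    dsimp only
    have h1 : ((p.1 ^ 2).toNat : ℤ) = p.1 ^ 2 := Int.toNat_of_nonneg (sq_nonneg _)
    have h2 : ((3 * p.2 ^ 2).toNat : ℤ) = 3 * p.2 ^ 2 := Int.toNat_of_nonneg (by positivity)
    have := hp.2
    omega


private lemma coeff_mul_theta (k : ℕ) :
    PowerSeries.coeff k (theta3Q 1 * theta3Q 3) = ((Tf k).card : ℚ) := by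
  rw [PowerSeries.coeff_mul, Tf_card_eq_sum]
  push_cast
  refine Finset.sum_congr rfl fun x _ => ?_
  rw [coeff_theta3Q 1 x.1 le_rfl, coeff_theta3Q 3 x.2 (by norm_num)]
  rfl

private lemma Tf_empty (k : ℕ) (hk : k % 4 = 2) : Tf k = ∅ := by
  ext p
  simp only [Tf, Finset.mem_filter, Finset.notMem_empty, iff_false, not_and]
  intro _ h
  have h4 : ((p.1 : ZMod 4)) ^ 2 + 3 * ((p.2 : ZMod 4)) ^ 2 = ((k : ℕ) : ZMod 4) := by
    have := congrArg (fun z : ℤ => (z : ZMod 4)) h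
    push_cast at this
    exact this
  have hk2 : ((k : ℕ) : ZMod 4) = 2 := by rw [← ZMod.natCast_mod, hk]; rfl
  rw [hk2] at h4
  revert h4
  generalize (p.1 : ZMod 4) = a
  generalize (p.2 : ZMod 4) = b
  revert a b
  decide

/-- If `4 ∣ k` then the number of integer solutions of `x² + 3y² = k` is `3·t_{1,k}`,
otherwise it is `t_{1,k}`, where `t_{1,k}` is the `k`-th coefficient of `t₁(q)`. -/
theorem count_solutions_via_tOne (k : ℕ) :
    (4 ∣ k → (Nat.card {p : ℤ × ℤ // p.1 ^ 2 + 3 * p.2 ^ 2 = (k : ℤ)} : ℚ) =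
        3 * PowerSeries.coeff k tOne) ∧
    (¬ 4 ∣ k → (Nat.card {p : ℤ × ℤ // p.1 ^ 2 + 3 * p.2 ^ 2 = (k : ℤ)} : ℚ) =
        PowerSeries.coeff k tOne) := by
  have hcard : (Nat.card {p : ℤ × ℤ // p.1 ^ 2 + 3 * p.2 ^ 2 = (k : ℤ)} : ℚ)
      = ((Tf k).card : ℚ) := by exact_mod_cast natCard_eq_Tf k
  set c : ℚ := ((Tf k).card : ℚ) with hc_def
  have hco : PowerSeries.coeff k tOne = (1/3 : ℚ) * (2 * c - (-1 : ℚ) ^ k * c) := by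
    rw [tOne, map_smul, smul_eq_mul]
    congr 1
    rw [map_sub, PowerSeries.coeff_rescale, coeff_mul_theta, two_mul, map_add,
      coeff_mul_theta]
    ring
  constructor
  · intro h4
    have hk2 : k % 2 = 0 := by omega
    have hpow : ((-1 : ℚ)) ^ k = 1 := Even.neg_one_pow (Nat.even_iff.mpr hk2)
    rw [hcard, hco, hpow]
    ring
  · intro h4
    rcases Nat.even_or_odd k with he | ho
    · have hk2 : k % 4 = 2 := by
        rw [Nat.even_iff] at he
        omega
      have hT := Tf_empty k hk2
      rw [hcard, hco, hc_def, hT]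
      simp
    · rw [hcard, hco, Odd.neg_one_pow ho]
      ring
end

section
/- Consider the derivation D on ℚ[t₁,t₂,t₃,t₄] given by D(t₁) = t₃ − t₁t₂, D(t₂) = 2t₁² − t₂²/2, D(t₃) = −2t₂t₃ + 8t₁³, D(t₄) = −4t₂t₄. Then the polynomial P = t₃² − 4(t₁⁴ − t₄) satisfies D(P) = −4t₂·P; in particular, the hypersurface t₃² = 4(t₁⁴ − t₄) is invariant under the vector field R₂. -/
/-- For the derivation `D` with `D t₁ = t₃ − t₁t₂`, `D t₂ = 2t₁² − t₂²/2`,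
`D t₃ = −2t₂t₃ + 8t₁³`, `D t₄ = −4t₂t₄` (the vector field `R₂`), the polynomial
`P = t₃² − 4(t₁⁴ − t₄)` satisfies `D P = −4t₂·P`; in particular the hypersurface
`t₃² = 4(t₁⁴ − t₄)` is invariant under `R₂`. -/
theorem R2_invariant_hypersurface {A : Type*} [CommRing A] [Algebra ℚ A]
    (D : Derivation ℚ A A) (t1 t2 t3 t4 : A)
    (h1 : D t1 = t3 - t1 * t2)
    (h2 : D t2 = 2 * t1 ^ 2 - algebraMap ℚ A (1 / 2) * t2 ^ 2)
    (h3 : D t3 = -2 * t2 * t3 + 8 * t1 ^ 3)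
    (h4 : D t4 = -4 * t2 * t4) :
    D (t3 ^ 2 - 4 * (t1 ^ 4 - t4)) = -4 * t2 * (t3 ^ 2 - 4 * (t1 ^ 4 - t4)) := by
  have e3 : D (t3 ^ 2) = 2 * t3 * D t3 := by
    rw [pow_two, Derivation.leibniz, smul_eq_mul]; ring
  have e1 : D (t1 ^ 4) = 4 * t1 ^ 3 * D t1 := by
    have h : t1 ^ 4 = t1 * (t1 * (t1 * t1)) := by ring
    rw [h]; simp only [Derivation.leibniz, smul_eq_mul]; ring
  have e4 : D (4 : A) = 0 := by
    have h : (4 : A) = algebraMap ℚ A 4 := by rw [map_ofNat]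
    rw [h, Derivation.map_algebraMap]
  rw [map_sub, e3, Derivation.leibniz, e4, map_sub, e1, h1, h3, h4,
    smul_eq_mul, smul_eq_mul]
  ring
end

section
/- Let Y be the (n+1)×(n+1) matrix with Y[1,2] = 1, Y[i,i+1] = Yᵢ₋₁ for 2 ≤ i ≤ n−1, Y[n,n+1] = −1, and all other entries zero, where Y₁,…,Y_{n−2} are scalars. Suppose YΦ + ΦYᵀ = 0 where Φ = Φₙ is as defined. Then for n even the relation forces Yᵢ₋₁ = −Y_{n−i} for 2 ≤ i ≤ n/2, and for n odd it forces Yᵢ₋₁ = −Y_{n−i} for 2 ≤ i ≤ (n−1)/2. -/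
open Matrix

/-- The constant intersection matrix `Φₙ` (see the paper, eqs. (1.2)–(1.3)). -/
def Phi (n : ℕ) : Matrix (Fin (n + 1)) (Fin (n + 1)) ℚ :=
  Matrix.of fun i j =>
    if (i : ℕ) + (j : ℕ) = n then
      (if Odd n ∧ (n + 1) / 2 ≤ (i : ℕ) then -1 else 1)
    else 0

/-- Let `Y` be the upper bidiagonal Yukawa matrix with `Y[1,2] = 1`,
`Y[i,i+1] = Yᵢ₋₁` for `2 ≤ i ≤ n−1`, `Y[n,n+1] = −1` (1-indexed; `c i`
denotes the scalar `Yᵢ`).  If `YΦ + ΦYᵀ = 0` then for even `n` one has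
`Yᵢ₋₁ = −Y_{n−i}` for `2 ≤ i ≤ n/2`, and for odd `n` the same for
`2 ≤ i ≤ (n−1)/2`. -/
theorem Yukawa_antisymmetry (n : ℕ) (hn : 2 ≤ n) (c : ℕ → ℚ)
    (Y : Matrix (Fin (n + 1)) (Fin (n + 1)) ℚ)
    (hY : Y = Matrix.of fun (i j : Fin (n + 1)) =>
      if (j : ℕ) = (i : ℕ) + 1 then
        (if (i : ℕ) = 0 then 1 else if (i : ℕ) = n - 1 then -1 else c (i : ℕ))
      else 0)
    (h : Y * Phi n + Phi n * Yᵀ = 0) :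
    (Even n → ∀ i : ℕ, 2 ≤ i → i ≤ n / 2 → c (i - 1) = -c (n - i)) ∧
    (Odd n → ∀ i : ℕ, 2 ≤ i → i ≤ (n - 1) / 2 → c (i - 1) = -c (n - i)) := by
  subst hY
  have key : ∀ r : ℕ, 1 ≤ r → r ≤ n - 2 →
      c r * (if Odd n ∧ (n + 1) / 2 ≤ r + 1 then (-1 : ℚ) else 1)
        + (if Odd n ∧ (n + 1) / 2 ≤ r then (-1 : ℚ) else 1) * c (n - 1 - r) = 0 := by
    intro r h1 h2
    have hrow : r < n + 1 := by omega
    have hcol : n - 1 - r < n + 1 := by omega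
    have hent := congrFun (congrFun h ⟨r, hrow⟩) ⟨n - 1 - r, hcol⟩
    simp only [Matrix.add_apply, Matrix.mul_apply, Matrix.zero_apply,
      Matrix.transpose_apply, Matrix.of_apply] at hent
    rw [Finset.sum_eq_single (⟨r + 1, by omega⟩ : Fin (n + 1)),
        Finset.sum_eq_single (⟨n - r, by omega⟩ : Fin (n + 1))] at hent
    · simp only [Phi, Matrix.of_apply] at hent
      have e1 : r + 1 = r + 1 := rfl
      have e2 : ¬ (r = 0) := by omega
      have e3 : ¬ (r = n - 1) := by omega
      have e4 : r + 1 + (n - 1 - r) = n := by omega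
      have e5 : r + (n - r) = n := by omega
      have e6 : n - r = n - 1 - r + 1 := by omega
      have e7 : ¬ (n - 1 - r = 0) := by omega
      have e8 : ¬ (n - 1 - r = n - 1) := by omega
      have e9 : r + (n - 1 - r + 1) = n := by omega
      simp only [e2, e3, e4, e5, e6, e7, e8, e9, if_true, if_false, if_pos rfl] at hent
      exact hent
    · intro b _ hb
      have hbv : (b : ℕ) ≠ n - r := by simpa [Fin.ext_iff] using hb
      have : ¬ ((b : ℕ) = n - 1 - r + 1) := by omega
      rw [if_neg this, mul_zero]
    · simp
    · intro b _ hb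
      have hbv : (b : ℕ) ≠ r + 1 := by simpa [Fin.ext_iff] using hb
      rw [if_neg hbv, zero_mul]
    · simp
  constructor
  · intro hev i hi1 hi2
    have hn4 : 4 ≤ n := by
      rcases hev with ⟨m, hm⟩; omega
    have hk := key (i - 1) (by omega) (by omega)
    have hno : ¬ Odd n := by simpa using hev
    have e1 : n - 1 - (i - 1) = n - i := by omega
    simp only [hno, false_and, if_false, e1, mul_one, one_mul] at hk
    linarith
  · intro hod i hi1 hi2
    have hn5 : 5 ≤ n := by
      rcases hod with ⟨m, hm⟩; omega
    have hk := key (i - 1) (by omega) (by omega)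
    have e1 : n - 1 - (i - 1) = n - i := by omega
    have e2 : ¬ ((n + 1) / 2 ≤ i - 1 + 1) := by omega
    have e3 : ¬ ((n + 1) / 2 ≤ i - 1) := by omega
    simp only [e1, e2, e3, and_false, if_false, mul_one, one_mul] at hk
    linarith
end
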